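/- For every n ≥ 2, the number of permutations of {1,...,n} avoiding 13-2 and containing exactly one occurrence of 23-1 equals 2^(n-2) - 1. -/
import Mathlib


/-- The value of the permutation at position `i` (0-indexed), or 0 if out of range. -/
def permVal {n : ℕ} (π : Equiv.Perm (Fin n)) (i : ℕ) : ℕ :=
  if h : i < n then (π ⟨i, h⟩ : ℕ) else 0

/-- Number of occurrences of the generalized pattern 12-3. -/
def occ12_3 {n : ℕ} (π : Equiv.Perm (Fin n)) : ℕ :=
  ((Finset.range n ×ˢ Finset.range n).filter (fun p =>
    p.1 + 1 < p.2 ∧ permVal π p.1 < permVal π (p.1 + 1) ∧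
      permVal π (p.1 + 1) < permVal π p.2)).card

/-- Number of occurrences of the generalized pattern 13-2. -/
def occ13_2 {n : ℕ} (π : Equiv.Perm (Fin n)) : ℕ :=
  ((Finset.range n ×ˢ Finset.range n).filter (fun p =>
    p.1 + 1 < p.2 ∧ permVal π p.1 < permVal π p.2 ∧
      permVal π p.2 < permVal π (p.1 + 1))).card

/-- Number of occurrences of the generalized pattern 21-3. -/
def occ21_3 {n : ℕ} (π : Equiv.Perm (Fin n)) : ℕ :=
  ((Finset.range n ×ˢ Finset.range n).filter (fun p =>
    p.1 + 1 < p.2 ∧ permVal π (p.1 + 1) < permVal π p.1 ∧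
      permVal π p.1 < permVal π p.2)).card

/-- Number of occurrences of the generalized pattern 23-1. -/
def occ23_1 {n : ℕ} (π : Equiv.Perm (Fin n)) : ℕ :=
  ((Finset.range n ×ˢ Finset.range n).filter (fun p =>
    p.1 + 1 < p.2 ∧ permVal π p.2 < permVal π p.1 ∧
      permVal π p.1 < permVal π (p.1 + 1))).card

/-- Number of occurrences of the generalized pattern 31-2. -/
def occ31_2 {n : ℕ} (π : Equiv.Perm (Fin n)) : ℕ :=
  ((Finset.range n ×ˢ Finset.range n).filter (fun p =>
    p.1 + 1 < p.2 ∧ permVal π (p.1 + 1) < permVal π p.2 ∧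
      permVal π p.2 < permVal π p.1)).card

/-- Number of occurrences of the generalized pattern 32-1. -/
def occ32_1 {n : ℕ} (π : Equiv.Perm (Fin n)) : ℕ :=
  ((Finset.range n ×ˢ Finset.range n).filter (fun p =>
    p.1 + 1 < p.2 ∧ permVal π p.2 < permVal π (p.1 + 1) ∧
      permVal π (p.1 + 1) < permVal π p.1)).card

lemma permVal_lt {n : ℕ} (π : Equiv.Perm (Fin n)) {i : ℕ} (h : i < n) : permVal π i < n := by
  simp only [permVal, dif_pos h]; exact (π ⟨i, h⟩).isLt

lemma permVal_inj {n : ℕ} (π : Equiv.Perm (Fin n)) {i j : ℕ} (hi : i < n) (hj : j < n)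
    (h : permVal π i = permVal π j) : i = j := by
  simp only [permVal, dif_pos hi, dif_pos hj] at h
  have := π.injective (Fin.ext h)
  simpa using congrArg Fin.val this

lemma no13 {N : ℕ} (π : Equiv.Perm (Fin N)) (h : occ13_2 π = 0) {a b : ℕ} (hb : b < N)
    (hab : a + 1 < b) (h1 : permVal π a < permVal π b) (h2 : permVal π b < permVal π (a+1)) :
    False := by
  rw [occ13_2, Finset.card_eq_zero] at h
  have : (a, b) ∈ ((Finset.range N ×ˢ Finset.range N).filter (fun p =>
      p.1 + 1 < p.2 ∧ permVal π p.1 < permVal π p.2 ∧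
        permVal π p.2 < permVal π (p.1 + 1))) := by
    simp only [Finset.mem_filter, Finset.mem_product, Finset.mem_range]
    exact ⟨⟨by omega, hb⟩, hab, h1, h2⟩
  rw [h] at this; exact absurd this (Finset.notMem_empty _)

lemma occ23_one {N : ℕ} (π : Equiv.Perm (Fin N)) (h : occ23_1 π = 1) :
    ∃ x : ℕ × ℕ, (x.1 + 1 < x.2 ∧ x.2 < N ∧ permVal π x.2 < permVal π x.1 ∧
      permVal π x.1 < permVal π (x.1 + 1)) ∧
    ∀ a b : ℕ, b < N → a + 1 < b → permVal π b < permVal π a →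
      permVal π a < permVal π (a+1) → (a, b) = x := by
  rw [occ23_1, Finset.card_eq_one] at h
  obtain ⟨x, hx⟩ := h
  have hxm : x ∈ ((Finset.range N ×ˢ Finset.range N).filter (fun p =>
      p.1 + 1 < p.2 ∧ permVal π p.2 < permVal π p.1 ∧
        permVal π p.1 < permVal π (p.1 + 1))) := by rw [hx]; exact Finset.mem_singleton_self x
  simp only [Finset.mem_filter, Finset.mem_product, Finset.mem_range] at hxm
  refine ⟨x, ⟨hxm.2.1, hxm.1.2, hxm.2.2⟩, fun a b hb hab h1 h2 => ?_⟩
  have : (a, b) ∈ ((Finset.range N ×ˢ Finset.range N).filter (fun p =>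
      p.1 + 1 < p.2 ∧ permVal π p.2 < permVal π p.1 ∧
        permVal π p.1 < permVal π (p.1 + 1))) := by
    simp only [Finset.mem_filter, Finset.mem_product, Finset.mem_range]
    exact ⟨⟨by omega, hb⟩, hab, h1, h2⟩
  rw [hx, Finset.mem_singleton] at this; exact this

def prependTop {n : ℕ} (σ : Equiv.Perm (Fin n)) : Equiv.Perm (Fin (n+1)) where
  toFun j := Fin.cases (Fin.last n) (fun i => (σ i).castSucc) j
  invFun j := if h : (j : ℕ) < n then (σ.symm ⟨j, h⟩).succ else 0
  left_inv := by
    intro j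
    refine Fin.cases ?_ (fun i => ?_) j
    · simp
    · simp
  right_inv := by
    intro j
    by_cases h : (j : ℕ) < n
    · simp [dif_pos h]
    · simp [dif_neg h]
      apply Fin.ext
      simp; omega

def appendTop {n : ℕ} (σ : Equiv.Perm (Fin n)) : Equiv.Perm (Fin (n+1)) where
  toFun j := if h : (j : ℕ) < n then (σ ⟨j, h⟩).castSucc else Fin.last n
  invFun j := if h : (j : ℕ) < n then (σ.symm ⟨j, h⟩).castSucc else Fin.last n
  left_inv := by
    intro j
    by_cases h : (j : ℕ) < n
    · simp [dif_pos h]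
    · simp [dif_neg h]
      apply Fin.ext; simp; omega
  right_inv := by
    intro j
    by_cases h : (j : ℕ) < n
    · simp [dif_pos h]
    · simp [dif_neg h]
      apply Fin.ext; simp; omega

-- permVal lemmas
lemma pv_prepend_zero {n : ℕ} (σ : Equiv.Perm (Fin n)) : permVal (prependTop σ) 0 = n := by
  simp [permVal, prependTop]

lemma pv_prepend_succ {n : ℕ} (σ : Equiv.Perm (Fin n)) (i : ℕ) :
    permVal (prependTop σ) (i + 1) = permVal σ i := by
  by_cases h : i < n
  · have h1 : i + 1 < n + 1 := by omega
    simp only [permVal, dif_pos h, dif_pos h1]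
    have : (⟨i + 1, h1⟩ : Fin (n+1)) = (⟨i, h⟩ : Fin n).succ := rfl
    rw [this]
    simp [prependTop]
  · have h1 : ¬ (i + 1 < n + 1) := by omega
    simp only [permVal, dif_neg h, dif_neg h1]

lemma pv_append_lt {n : ℕ} (σ : Equiv.Perm (Fin n)) {i : ℕ} (h : i < n) :
    permVal (appendTop σ) i = permVal σ i := by
  have h1 : i < n + 1 := by omega
  simp only [permVal, dif_pos h, dif_pos h1, appendTop]
  simp only [Equiv.coe_fn_mk]
  rw [dif_pos h]
  simp

lemma pv_append_last {n : ℕ} (σ : Equiv.Perm (Fin n)) : permVal (appendTop σ) n = n := by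
  simp only [permVal, dif_pos (Nat.lt_succ_self n), appendTop, Equiv.coe_fn_mk]
  rw [dif_neg (by simp)]
  simp

lemma permVal_le {n : ℕ} (σ : Equiv.Perm (Fin n)) (i : ℕ) : permVal σ i ≤ n - 1 := by
  by_cases h : i < n
  · have := permVal_lt σ h; omega
  · simp [permVal, dif_neg h]


lemma occ13_2_prepend {n : ℕ} (σ : Equiv.Perm (Fin n)) :
    occ13_2 (prependTop σ) = occ13_2 σ := by
  unfold occ13_2
  refine Finset.card_bij' (fun p _ => (p.1 - 1, p.2 - 1)) (fun p _ => (p.1 + 1, p.2 + 1)) ?_ ?_ ?_ ?_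
  · rintro ⟨a, b⟩ hp
    simp only [Finset.mem_filter, Finset.mem_product, Finset.mem_range] at hp ⊢
    obtain ⟨⟨ha, hb⟩, hab, h1, h2⟩ := hp
    have ha0 : a ≠ 0 := by
      rintro rfl
      rw [pv_prepend_zero] at h1
      have hb2 : b = (b-1) + 1 := by omega
      rw [hb2, pv_prepend_succ] at h1
      have := permVal_le σ (b-1)
      omega
    obtain ⟨a, rfl⟩ : ∃ a', a = a' + 1 := ⟨a - 1, by omega⟩
    obtain ⟨b, rfl⟩ : ∃ b', b = b' + 1 := ⟨b - 1, by omega⟩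
    simp only [pv_prepend_succ] at h1 h2
    simp only [Nat.add_sub_cancel]
    exact ⟨⟨by omega, by omega⟩, by omega, h1, h2⟩
  · rintro ⟨a, b⟩ hp
    simp only [Finset.mem_filter, Finset.mem_product, Finset.mem_range] at hp ⊢
    obtain ⟨⟨ha, hb⟩, hab, h1, h2⟩ := hp
    simp only [pv_prepend_succ]
    exact ⟨⟨by omega, by omega⟩, by omega, h1, h2⟩
  · rintro ⟨a, b⟩ hp
    simp only [Finset.mem_filter, Finset.mem_product, Finset.mem_range] at hp
    obtain ⟨⟨ha, hb⟩, hab, h1, h2⟩ := hp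
    have ha0 : a ≠ 0 := by
      rintro rfl
      rw [pv_prepend_zero] at h1
      have hb2 : b = (b-1) + 1 := by omega
      rw [hb2, pv_prepend_succ] at h1
      have := permVal_le σ (b-1)
      omega
    simp only [Prod.mk.injEq]
    omega
  · rintro ⟨a, b⟩ hp
    simp only [Prod.mk.injEq]
    omega

lemma occ23_1_prepend {n : ℕ} (σ : Equiv.Perm (Fin n)) :
    occ23_1 (prependTop σ) = occ23_1 σ := by
  unfold occ23_1
  refine Finset.card_bij' (fun p _ => (p.1 - 1, p.2 - 1)) (fun p _ => (p.1 + 1, p.2 + 1)) ?_ ?_ ?_ ?_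
  · rintro ⟨a, b⟩ hp
    simp only [Finset.mem_filter, Finset.mem_product, Finset.mem_range] at hp ⊢
    obtain ⟨⟨ha, hb⟩, hab, h1, h2⟩ := hp
    have ha0 : a ≠ 0 := by
      rintro rfl
      rw [pv_prepend_zero] at h2
      rw [show (0:ℕ)+1 = 0+1 from rfl, pv_prepend_succ] at h2
      have := permVal_le σ 0
      omega
    obtain ⟨a, rfl⟩ : ∃ a', a = a' + 1 := ⟨a - 1, by omega⟩
    obtain ⟨b, rfl⟩ : ∃ b', b = b' + 1 := ⟨b - 1, by omega⟩
    simp only [pv_prepend_succ] at h1 h2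
    simp only [Nat.add_sub_cancel]
    exact ⟨⟨by omega, by omega⟩, by omega, h1, h2⟩
  · rintro ⟨a, b⟩ hp
    simp only [Finset.mem_filter, Finset.mem_product, Finset.mem_range] at hp ⊢
    obtain ⟨⟨ha, hb⟩, hab, h1, h2⟩ := hp
    simp only [pv_prepend_succ]
    exact ⟨⟨by omega, by omega⟩, by omega, h1, h2⟩
  · rintro ⟨a, b⟩ hp
    simp only [Finset.mem_filter, Finset.mem_product, Finset.mem_range] at hp
    obtain ⟨⟨ha, hb⟩, hab, h1, h2⟩ := hp
    have ha0 : a ≠ 0 := by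
      rintro rfl
      rw [pv_prepend_zero] at h2
      rw [show (0:ℕ)+1 = 0+1 from rfl, pv_prepend_succ] at h2
      have := permVal_le σ 0
      omega
    simp only [Prod.mk.injEq]
    omega
  · rintro ⟨a, b⟩ hp
    simp only [Prod.mk.injEq]
    omega

lemma occ13_2_append {n : ℕ} (σ : Equiv.Perm (Fin n)) :
    occ13_2 (appendTop σ) = occ13_2 σ := by
  unfold occ13_2
  refine Finset.card_bij' (fun p _ => p) (fun p _ => p) ?_ ?_ ?_ ?_
  · rintro ⟨a, b⟩ hp
    simp only [Finset.mem_filter, Finset.mem_product, Finset.mem_range] at hp ⊢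
    obtain ⟨⟨ha, hb⟩, hab, h1, h2⟩ := hp
    have hbn : b ≠ n := by
      intro hbe
      rw [hbe, pv_append_last] at h2
      have han : a + 1 < n := by omega
      rw [pv_append_lt σ han] at h2
      have := permVal_lt σ han
      omega
    have e1 : permVal (appendTop σ) a = permVal σ a := pv_append_lt σ (by omega)
    have e2 : permVal (appendTop σ) (a+1) = permVal σ (a+1) := pv_append_lt σ (by omega)
    have e3 : permVal (appendTop σ) b = permVal σ b := pv_append_lt σ (by omega)
    rw [e1, e3] at h1; rw [e3, e2] at h2
    exact ⟨⟨by omega, by omega⟩, hab, h1, h2⟩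
  · rintro ⟨a, b⟩ hp
    simp only [Finset.mem_filter, Finset.mem_product, Finset.mem_range] at hp ⊢
    obtain ⟨⟨ha, hb⟩, hab, h1, h2⟩ := hp
    have e1 : permVal (appendTop σ) a = permVal σ a := pv_append_lt σ (by omega)
    have e2 : permVal (appendTop σ) (a+1) = permVal σ (a+1) := pv_append_lt σ (by omega)
    have e3 : permVal (appendTop σ) b = permVal σ b := pv_append_lt σ (by omega)
    rw [e1, e2, e3]
    exact ⟨⟨by omega, by omega⟩, hab, h1, h2⟩
  · rintro ⟨a, b⟩ _; rfl
  · rintro ⟨a, b⟩ _; rfl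

lemma occ23_1_append {n : ℕ} (σ : Equiv.Perm (Fin n)) :
    occ23_1 (appendTop σ) = occ23_1 σ := by
  unfold occ23_1
  refine Finset.card_bij' (fun p _ => p) (fun p _ => p) ?_ ?_ ?_ ?_
  · rintro ⟨a, b⟩ hp
    simp only [Finset.mem_filter, Finset.mem_product, Finset.mem_range] at hp ⊢
    obtain ⟨⟨ha, hb⟩, hab, h1, h2⟩ := hp
    have hbn : b ≠ n := by
      intro hbe
      rw [hbe, pv_append_last] at h1
      have han : a < n := by omega
      rw [pv_append_lt σ han] at h1
      have := permVal_lt σ han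
      omega
    have e1 : permVal (appendTop σ) a = permVal σ a := pv_append_lt σ (by omega)
    have e2 : permVal (appendTop σ) (a+1) = permVal σ (a+1) := pv_append_lt σ (by omega)
    have e3 : permVal (appendTop σ) b = permVal σ b := pv_append_lt σ (by omega)
    rw [e3, e1] at h1; rw [e1, e2] at h2
    exact ⟨⟨by omega, by omega⟩, hab, h1, h2⟩
  · rintro ⟨a, b⟩ hp
    simp only [Finset.mem_filter, Finset.mem_product, Finset.mem_range] at hp ⊢
    obtain ⟨⟨ha, hb⟩, hab, h1, h2⟩ := hp
    have e1 : permVal (appendTop σ) a = permVal σ a := pv_append_lt σ (by omega)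
    have e2 : permVal (appendTop σ) (a+1) = permVal σ (a+1) := pv_append_lt σ (by omega)
    have e3 : permVal (appendTop σ) b = permVal σ b := pv_append_lt σ (by omega)
    rw [e1, e2, e3]
    exact ⟨⟨by omega, by omega⟩, hab, h1, h2⟩
  · rintro ⟨a, b⟩ _; rfl
  · rintro ⟨a, b⟩ _; rfl

def rho (m : ℕ) : Equiv.Perm (Fin (m+3)) where
  toFun i := if (i : ℕ) = m+2 then ⟨0, by omega⟩ else if (i : ℕ) = m+1 then ⟨m+2, by omega⟩
    else ⟨m+1-(i:ℕ), by omega⟩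
  invFun v := if (v : ℕ) = 0 then ⟨m+2, by omega⟩ else if (v : ℕ) = m+2 then ⟨m+1, by omega⟩
    else ⟨m+1-(v:ℕ), by omega⟩
  left_inv := by
    rintro ⟨i, hi⟩
    simp only
    split_ifs <;> simp_all [Fin.ext_iff] <;> omega
  right_inv := by
    rintro ⟨v, hv⟩
    simp only
    split_ifs <;> simp_all [Fin.ext_iff] <;> omega

lemma pv_rho_low {m : ℕ} {i : ℕ} (h : i ≤ m) : permVal (rho m) i = m+1-i := by
  have hi : i < m+3 := by omega
  simp only [permVal, dif_pos hi, rho, Equiv.coe_fn_mk]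
  rw [if_neg (by omega), if_neg (by omega)]

lemma pv_rho_m1 {m : ℕ} : permVal (rho m) (m+1) = m+2 := by
  have hi : m+1 < m+3 := by omega
  simp only [permVal, dif_pos hi, rho, Equiv.coe_fn_mk]
  simp

lemma pv_rho_m2 {m : ℕ} : permVal (rho m) (m+2) = 0 := by
  have hi : m+2 < m+3 := by omega
  simp only [permVal, dif_pos hi, rho, Equiv.coe_fn_mk]
  simp

lemma occ13_2_rho {m : ℕ} : occ13_2 (rho m) = 0 := by
  rw [occ13_2, Finset.card_eq_zero, Finset.filter_eq_empty_iff]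
  rintro ⟨a, b⟩ hp
  simp only [Finset.mem_product, Finset.mem_range] at hp
  rintro ⟨hab, h1, h2⟩
  have ham : a ≤ m := by omega
  by_cases he : a = m
  · have hb2 : b = m+2 := by omega
    rw [he, hb2] at h1
    rw [pv_rho_low (le_refl m), pv_rho_m2] at h1
    omega
  · rw [pv_rho_low ham] at h1
    rw [pv_rho_low (show a+1 ≤ m by omega)] at h2
    omega

lemma occ23_1_rho {m : ℕ} : occ23_1 (rho m) = 1 := by
  rw [occ23_1]
  have : ((Finset.range (m+3) ×ˢ Finset.range (m+3)).filter (fun p =>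
      p.1 + 1 < p.2 ∧ permVal (rho m) p.2 < permVal (rho m) p.1 ∧
        permVal (rho m) p.1 < permVal (rho m) (p.1 + 1))) = {(m, m+2)} := by
    ext ⟨a, b⟩
    simp only [Finset.mem_filter, Finset.mem_product, Finset.mem_range, Finset.mem_singleton,
      Prod.mk.injEq]
    constructor
    · rintro ⟨⟨ha, hb⟩, hab, h1, h2⟩
      have ham : a ≤ m := by omega
      by_cases he : a = m
      · exact ⟨he, by omega⟩
      · exfalso
        rw [pv_rho_low ham] at h2
        rw [pv_rho_low (show a+1 ≤ m by omega)] at h2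
        omega
    · rintro ⟨ha', hb'⟩
      rw [ha', hb']
      refine ⟨⟨by omega, by omega⟩, by omega, ?_, ?_⟩
      · rw [pv_rho_m2, pv_rho_low (le_refl m)]; omega
      · rw [pv_rho_low (le_refl m), pv_rho_m1]; omega
  rw [this, Finset.card_singleton]

lemma max_pos {m : ℕ} (π : Equiv.Perm (Fin (m+3))) (h13 : occ13_2 π = 0) (h23 : occ23_1 π = 1)
    {p : ℕ} (hp : p < m+3) (hmax : permVal π p = m+2) : p = 0 ∨ p = m+1 ∨ p = m+2 := by
  by_contra hcon
  push_neg at hcon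
  obtain ⟨hp0, hp1, hp2⟩ := hcon
  -- 1 ≤ p ≤ m
  have hpm : 1 ≤ p ∧ p ≤ m := by omega
  obtain ⟨x, hx, huniq⟩ := occ23_one π h23
  have hne : ∀ j, j < m+3 → j ≠ p → permVal π j ≠ m+2 := by
    intro j hj hjp heq
    exact hjp (permVal_inj π hj hp (heq.trans hmax.symm))
  have hsm : ∀ j, p < j → j < m+3 → permVal π j < permVal π (p-1) := by
    intro j hpj hj
    have hj2 : permVal π j < m + 2 :=
      lt_of_le_of_ne (by have := permVal_lt π hj; omega) (hne j hj (by omega))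
    have hne2 : permVal π j ≠ permVal π (p-1) := fun h =>
      (by omega : j ≠ p - 1) (permVal_inj π hj (by omega) h)
    rcases lt_or_gt_of_ne hne2 with h | h
    · exact h
    · exfalso
      have hpe : (p-1) + 1 = p := by omega
      refine no13 π h13 hj (by omega) h ?_
      rw [hpe, hmax]; exact hj2
  have hasc : permVal π (p-1) < permVal π ((p-1)+1) := by
    rw [show (p-1)+1 = p by omega, hmax]
    exact lt_of_le_of_ne (by have := permVal_lt π (show p-1 < m+3 by omega); omega)
      (hne (p-1) (by omega) (by omega))
  have e1 := huniq (p-1) (p+1) (by omega) (by omega) (hsm (p+1) (by omega) (by omega)) hasc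
  have e2 := huniq (p-1) (p+2) (by omega) (by omega) (hsm (p+2) (by omega) (by omega)) hasc
  rw [← e2] at e1
  simp only [Prod.mk.injEq] at e1
  omega

lemma rho_unique {m : ℕ} (π : Equiv.Perm (Fin (m+3))) (h13 : occ13_2 π = 0)
    (h23 : occ23_1 π = 1) (hmax : permVal π (m+1) = m+2) : π = rho m := by
  obtain ⟨x, hx, huniq⟩ := occ23_one π h23
  have hne : ∀ j, j < m+3 → j ≠ m+1 → permVal π j ≠ m+2 := by
    intro j hj hjp heq
    exact hjp (permVal_inj π hj (by omega) (heq.trans hmax.symm))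
  have hlt : ∀ j, j < m+3 → j ≠ m+1 → permVal π j < m+2 := by
    intro j hj hjp
    exact lt_of_le_of_ne (by have := permVal_lt π hj; omega) (hne j hj hjp)
  -- (a) pv (m+2) < pv m
  have ha2 : permVal π (m+2) < permVal π m := by
    have hne2 : permVal π (m+2) ≠ permVal π m := fun h =>
      (by omega : (m+2 : ℕ) ≠ m) (permVal_inj π (by omega) (by omega) h)
    rcases lt_or_gt_of_ne hne2 with h | h
    · exact h
    · exfalso
      refine no13 π h13 (show m+2 < m+3 by omega) (by omega) h ?_
      rw [show m+1 = m+1 from rfl, hmax]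
      exact hlt (m+2) (by omega) (by omega)
  have hasc : permVal π m < permVal π (m+1) := by
    rw [hmax]; exact hlt m (by omega) (by omega)
  have key : (m, m+2) = x := huniq m (m+2) (by omega) (by omega) ha2 hasc
  -- (b) no ascent before m
  have noasc : ∀ r, r < m → permVal π (r+1) < permVal π r := by
    have hA : (Finset.range m).filter (fun r => permVal π r < permVal π (r+1)) = ∅ := by
      by_contra hA
      set A := (Finset.range m).filter (fun r => permVal π r < permVal π (r+1)) with hAdef
      have hne' : A.Nonempty := Finset.nonempty_of_ne_empty hA
      set t := A.max' hne' with htdef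
      have htA : t ∈ A := A.max'_mem hne'
      simp only [hAdef, Finset.mem_filter, Finset.mem_range] at htA
      obtain ⟨htm, htasc⟩ := htA
      have hdesc : ∀ s, t < s → s < m → permVal π (s+1) < permVal π s := by
        intro s hts hsm
        have hsA : s ∉ A := by
          intro hs
          have := A.le_max' s hs
          omega
        simp only [hAdef, Finset.mem_filter, Finset.mem_range] at hsA
        have h1 : ¬ (permVal π s < permVal π (s+1)) := fun h => hsA ⟨hsm, h⟩
        have h2 : permVal π (s+1) ≠ permVal π s := fun h =>
          (by omega : s + 1 ≠ s) (permVal_inj π (by omega) (by omega) h)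
        omega
      have chain : ∀ s, t+1 ≤ s → s ≤ m → permVal π s ≤ permVal π (t+1) := by
        intro s hs
        induction s, hs using Nat.le_induction with
        | base => intro _; exact le_rfl
        | succ s hs ih =>
          intro hsm
          have h1 : permVal π (s+1) < permVal π s := hdesc s (by omega) (by omega)
          exact le_trans (le_of_lt h1) (ih (by omega))
      -- (t, m+2) analysis
      have ht1 : permVal π t < permVal π (m+2) := by
        have hne2 : permVal π t ≠ permVal π (m+2) := fun h =>
          (by omega : t ≠ m+2) (permVal_inj π (by omega) (by omega) h)
        rcases lt_or_gt_of_ne hne2 with h | h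
        · exact h
        · exfalso
          have := huniq t (m+2) (by omega) (by omega) h htasc
          rw [← key] at this
          simp only [Prod.mk.injEq] at this
          omega
      have ht2 : permVal π (t+1) < permVal π (m+2) := by
        have hne2 : permVal π (t+1) ≠ permVal π (m+2) := fun h =>
          (by omega : t+1 ≠ m+2) (permVal_inj π (by omega) (by omega) h)
        rcases lt_or_gt_of_ne hne2 with h | h
        · exact h
        · exact absurd (no13 π h13 (show m+2 < m+3 by omega) (by omega) ht1 h) (fun f => f)
      have := chain m (by omega) le_rfl
      omega
    intro r hr
    have hrA : r ∉ (Finset.range m).filter (fun r => permVal π r < permVal π (r+1)) := by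
      rw [hA]; exact Finset.notMem_empty r
    simp only [Finset.mem_filter, Finset.mem_range] at hrA
    have h1 : ¬ (permVal π r < permVal π (r+1)) := fun h => hrA ⟨hr, h⟩
    have h2 : permVal π (r+1) ≠ permVal π r := fun h =>
      (by omega : r + 1 ≠ r) (permVal_inj π (by omega) (by omega) h)
    omega
  -- (c) pv (m+2) = 0
  have hzero : permVal π (m+2) = 0 := by
    by_contra h0
    have hq : permVal π ((π.symm 0 : Fin (m+3)) : ℕ) = 0 := by
      simp [permVal, Fin.isLt]
    set q := ((π.symm 0 : Fin (m+3)) : ℕ) with hqdef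
    have hq3 : q < m+3 := Fin.isLt _
    have hqne1 : q ≠ m+1 := by
      intro h; rw [h, hmax] at hq; omega
    have hqne2 : q ≠ m+2 := by
      intro h; rw [h] at hq; exact h0 hq
    have hqnem : q ≠ m := by
      intro h; rw [h] at hq; rw [hq] at ha2; omega
    have hqltm : q < m := by omega
    have := noasc q hqltm
    omega
  -- (d) values on the prefix
  have chain2 : ∀ i j, i ≤ j → j ≤ m → permVal π j + (j - i) ≤ permVal π i := by
    intro i j hij
    induction j, hij using Nat.le_induction with
    | base => intro _; omega
    | succ j hj ih =>
      intro hjm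
      have h1 := noasc j (by omega)
      have h2 := ih (by omega)
      omega
  have hm1 : 1 ≤ permVal π m := by
    rcases Nat.eq_zero_or_pos (permVal π m) with h | h
    · exfalso
      have := permVal_inj π (show m < m+3 by omega) (show m+2 < m+3 by omega)
        (h.trans hzero.symm)
      omega
    · exact h
  have h0m : permVal π 0 ≤ m+1 := by
    have := hlt 0 (by omega) (by omega); omega
  have hup : ∀ i, i ≤ m → permVal π i = m+1-i := by
    intro i him
    have l1 := chain2 i m him le_rfl
    have l2 := chain2 0 i (Nat.zero_le i) him
    omega
  -- conclude
  apply Equiv.ext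
  rintro ⟨j, hj⟩
  apply Fin.ext
  have eπ : ((π ⟨j, hj⟩ : Fin (m+3)) : ℕ) = permVal π j := by simp [permVal, dif_pos hj]
  have eρ : ((rho m ⟨j, hj⟩ : Fin (m+3)) : ℕ) = permVal (rho m) j := by
    simp [permVal, dif_pos hj]
  rw [eπ, eρ]
  rcases (by omega : j ≤ m ∨ j = m+1 ∨ j = m+2) with h | h | h
  · rw [hup j h, pv_rho_low h]
  · rw [h, hmax, pv_rho_m1]
  · rw [h, hzero, pv_rho_m2]

lemma card_S0 {m : ℕ} :
    (Finset.univ.filter (fun π : Equiv.Perm (Fin (m+3)) =>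
      (occ13_2 π = 0 ∧ occ23_1 π = 1) ∧ permVal π 0 = m+2)).card =
    (Finset.univ.filter (fun σ : Equiv.Perm (Fin (m+2)) =>
      occ13_2 σ = 0 ∧ occ23_1 σ = 1)).card := by
  refine (Finset.card_bij (fun σ _ => prependTop σ) ?_ ?_ ?_).symm
  · intro σ hσ
    simp only [Finset.mem_filter, Finset.mem_univ, true_and] at hσ ⊢
    exact ⟨⟨(occ13_2_prepend σ).trans hσ.1, (occ23_1_prepend σ).trans hσ.2⟩,
      pv_prepend_zero σ⟩
  · intro σ _ τ _ h
    apply Equiv.ext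
    intro i
    have := DFunLike.congr_fun h i.succ
    simpa [prependTop] using this
  · rintro π hπ
    simp only [Finset.mem_filter, Finset.mem_univ, true_and] at hπ
    obtain ⟨⟨hg1, hg2⟩, hpv⟩ := hπ
    have h0v : (π ⟨0, by omega⟩ : ℕ) = m+2 := by
      simpa [permVal] using hpv
    have h0 : π 0 = Fin.last (m+2) := by
      apply Fin.ext
      rw [Fin.val_last]
      exact h0v
    have hlt : ∀ i : Fin (m+2), (π i.succ : ℕ) < m+2 := by
      intro i
      have hne : π i.succ ≠ π 0 := (Equiv.injective π).ne (Fin.succ_ne_zero i)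
      rw [h0] at hne
      have h1 : (π i.succ : ℕ) < m+3 := Fin.isLt _
      have h2 : (π i.succ : ℕ) ≠ m+2 := fun h => hne (Fin.ext (h.trans (Fin.val_last _).symm))
      omega
    have hne0 : ∀ j : Fin (m+2), π.symm j.castSucc ≠ 0 := by
      intro j h
      have : j.castSucc = π 0 := by rw [← h, Equiv.apply_symm_apply]
      rw [h0] at this
      have := congrArg Fin.val this
      simp [Fin.val_last] at this
      omega
    obtain ⟨σ, hσeq⟩ : ∃ σ : Equiv.Perm (Fin (m+2)), prependTop σ = π := by
      refine ⟨Equiv.mk (fun i => ⟨(π i.succ : ℕ), hlt i⟩)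
        (fun j => (π.symm j.castSucc).pred (hne0 j)) ?_ ?_, ?_⟩
      · intro i
        simp only
        have hc : ((⟨(π i.succ : ℕ), hlt i⟩ : Fin (m+2)).castSucc) = π i.succ := by
          apply Fin.ext; simp
        have h2 : π.symm ((⟨(π i.succ : ℕ), hlt i⟩ : Fin (m+2)).castSucc) = i.succ := by
          rw [hc, Equiv.symm_apply_apply]
        apply Fin.ext
        rw [Fin.coe_pred, h2]
        simp
      · intro j
        simp only
        apply Fin.ext
        simp only [Fin.succ_pred]
        have : π (π.symm j.castSucc) = j.castSucc := Equiv.apply_symm_apply _ _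
        rw [this]
        simp
      · apply Equiv.ext
        intro j
        refine Fin.cases ?_ (fun i => ?_) j
        · show prependTop _ 0 = π 0
          rw [h0]
          simp [prependTop]
        · show prependTop _ i.succ = π i.succ
          simp only [prependTop, Equiv.coe_fn_mk, Fin.cases_succ]
          apply Fin.ext
          simp
    refine ⟨σ, ?_, hσeq⟩
    simp only [Finset.mem_filter, Finset.mem_univ, true_and]
    exact ⟨by rw [← occ13_2_prepend σ, hσeq]; exact hg1,
      by rw [← occ23_1_prepend σ, hσeq]; exact hg2⟩

lemma card_S2 {m : ℕ} :
    (Finset.univ.filter (fun π : Equiv.Perm (Fin (m+3)) =>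
      (occ13_2 π = 0 ∧ occ23_1 π = 1) ∧ permVal π (m+2) = m+2)).card =
    (Finset.univ.filter (fun σ : Equiv.Perm (Fin (m+2)) =>
      occ13_2 σ = 0 ∧ occ23_1 σ = 1)).card := by
  refine (Finset.card_bij (fun σ _ => appendTop σ) ?_ ?_ ?_).symm
  · intro σ hσ
    simp only [Finset.mem_filter, Finset.mem_univ, true_and] at hσ ⊢
    exact ⟨⟨(occ13_2_append σ).trans hσ.1, (occ23_1_append σ).trans hσ.2⟩,
      pv_append_last σ⟩
  · intro σ _ τ _ h
    apply Equiv.ext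
    intro i
    have := DFunLike.congr_fun h i.castSucc
    simp only [appendTop, Equiv.coe_fn_mk] at this
    have hc : ((i.castSucc : Fin (m+3)) : ℕ) < m+2 := by simp [Fin.isLt]
    rw [dif_pos hc, dif_pos hc] at this
    have h2 : (⟨(i.castSucc : ℕ), hc⟩ : Fin (m+2)) = i := by apply Fin.ext; simp
    rw [h2] at this
    exact Fin.castSucc_injective _ this
  · rintro π hπ
    simp only [Finset.mem_filter, Finset.mem_univ, true_and] at hπ
    obtain ⟨⟨hg1, hg2⟩, hpv⟩ := hπ
    have hlast : π (Fin.last (m+2)) = Fin.last (m+2) := by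
      have h0v : (π ⟨m+2, by omega⟩ : ℕ) = m+2 := by
        simpa [permVal] using hpv
      have : (⟨m+2, by omega⟩ : Fin (m+3)) = Fin.last (m+2) := by apply Fin.ext; simp
      rw [this] at h0v
      apply Fin.ext
      rw [Fin.val_last]
      exact h0v
    have hlt : ∀ i : Fin (m+2), (π i.castSucc : ℕ) < m+2 := by
      intro i
      have hne : π i.castSucc ≠ π (Fin.last (m+2)) :=
        (Equiv.injective π).ne (Fin.castSucc_lt_last i).ne
      rw [hlast] at hne
      have h1 : (π i.castSucc : ℕ) < m+3 := Fin.isLt _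
      have h2 : (π i.castSucc : ℕ) ≠ m+2 := fun h =>
        hne (Fin.ext (h.trans (Fin.val_last _).symm))
      omega
    have hlts : ∀ j : Fin (m+2), ((π.symm j.castSucc : Fin (m+3)) : ℕ) < m+2 := by
      intro j
      have hne : π.symm j.castSucc ≠ Fin.last (m+2) := by
        intro h
        have : j.castSucc = π (Fin.last (m+2)) := by rw [← h, Equiv.apply_symm_apply]
        rw [hlast] at this
        exact (Fin.castSucc_lt_last j).ne (by rw [this])
      have h1 : ((π.symm j.castSucc : Fin (m+3)) : ℕ) < m+3 := Fin.isLt _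
      have h2 : ((π.symm j.castSucc : Fin (m+3)) : ℕ) ≠ m+2 := fun h =>
        hne (Fin.ext (h.trans (Fin.val_last _).symm))
      omega
    obtain ⟨σ, hσeq⟩ : ∃ σ : Equiv.Perm (Fin (m+2)), appendTop σ = π := by
      refine ⟨Equiv.mk (fun i => ⟨(π i.castSucc : ℕ), hlt i⟩)
        (fun j => ⟨((π.symm j.castSucc : Fin (m+3)) : ℕ), hlts j⟩) ?_ ?_, ?_⟩
      · intro i
        simp only
        apply Fin.ext
        simp only
        have hc : ((⟨(π i.castSucc : ℕ), hlt i⟩ : Fin (m+2)).castSucc) = π i.castSucc := by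
          apply Fin.ext; simp
        rw [hc, Equiv.symm_apply_apply]
        simp
      · intro j
        simp only
        apply Fin.ext
        simp only
        have hc : ((⟨((π.symm j.castSucc : Fin (m+3)) : ℕ), hlts j⟩ : Fin (m+2)).castSucc)
            = π.symm j.castSucc := by
          apply Fin.ext; simp
        rw [hc, Equiv.apply_symm_apply]
        simp
      · apply Equiv.ext
        intro j
        simp only [appendTop, Equiv.coe_fn_mk]
        by_cases hj : (j : ℕ) < m+2
        · rw [dif_pos hj]
          apply Fin.ext
          simp only [Fin.coe_castSucc]
          have hc : ((⟨(j : ℕ), hj⟩ : Fin (m+2)).castSucc) = j := by apply Fin.ext; simp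
          rw [hc]
        · rw [dif_neg hj]
          have hj2 : j = Fin.last (m+2) := by
            apply Fin.ext; rw [Fin.val_last]; have := Fin.isLt j; omega
          rw [hj2, hlast]
    refine ⟨σ, ?_, hσeq⟩
    simp only [Finset.mem_filter, Finset.mem_univ, true_and]
    exact ⟨by rw [← occ13_2_append σ, hσeq]; exact hg1,
      by rw [← occ23_1_append σ, hσeq]; exact hg2⟩

lemma card_S1 {m : ℕ} :
    (Finset.univ.filter (fun π : Equiv.Perm (Fin (m+3)) =>
      (occ13_2 π = 0 ∧ occ23_1 π = 1) ∧ permVal π (m+1) = m+2)).card = 1 := by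
  rw [Finset.card_eq_one]
  refine ⟨rho m, ?_⟩
  ext π
  simp only [Finset.mem_filter, Finset.mem_univ, true_and, Finset.mem_singleton]
  constructor
  · rintro ⟨⟨h1, h2⟩, h3⟩
    exact rho_unique π h1 h2 h3
  · rintro rfl
    exact ⟨⟨occ13_2_rho, occ23_1_rho⟩, pv_rho_m1⟩

theorem stmt12' (n : ℕ) (hn : 2 ≤ n) :
    (Finset.univ.filter (fun π : Equiv.Perm (Fin n) =>
      occ13_2 π = 0 ∧ occ23_1 π = 1)).card = 2 ^ (n - 2) - 1 := by
  induction n, hn using Nat.le_induction with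
  | base => decide
  | succ n hn ih =>
    obtain ⟨m, rfl⟩ : ∃ m, n = m + 2 := ⟨n - 2, by omega⟩
    have hC : (Finset.univ.filter (fun σ : Equiv.Perm (Fin (m+2)) =>
        occ13_2 σ = 0 ∧ occ23_1 σ = 1)).card = 2^m - 1 := by
      simpa using ih
    have key : (Finset.univ.filter (fun π : Equiv.Perm (Fin (m+3)) =>
        occ13_2 π = 0 ∧ occ23_1 π = 1)).card = 2^(m+1) - 1 := by
      have hsplit : (Finset.univ.filter (fun π : Equiv.Perm (Fin (m+3)) =>
          occ13_2 π = 0 ∧ occ23_1 π = 1)) =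
          ((Finset.univ.filter (fun π : Equiv.Perm (Fin (m+3)) =>
            (occ13_2 π = 0 ∧ occ23_1 π = 1) ∧ permVal π 0 = m+2)) ∪
          (Finset.univ.filter (fun π : Equiv.Perm (Fin (m+3)) =>
            (occ13_2 π = 0 ∧ occ23_1 π = 1) ∧ permVal π (m+1) = m+2))) ∪
          (Finset.univ.filter (fun π : Equiv.Perm (Fin (m+3)) =>
            (occ13_2 π = 0 ∧ occ23_1 π = 1) ∧ permVal π (m+2) = m+2)) := by
        ext π
        simp only [Finset.mem_filter, Finset.mem_union, Finset.mem_univ, true_and]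
        constructor
        · intro hP
          have hp : permVal π ((π.symm (Fin.last (m+2)) : Fin (m+3)) : ℕ) = m+2 := by
            simp [permVal, Fin.isLt]
          rcases max_pos π hP.1 hP.2 (Fin.isLt _) hp with h | h | h
          · rw [h] at hp; exact Or.inl (Or.inl ⟨hP, hp⟩)
          · rw [h] at hp; exact Or.inl (Or.inr ⟨hP, hp⟩)
          · rw [h] at hp; exact Or.inr ⟨hP, hp⟩
        · rintro ((⟨hP, _⟩ | ⟨hP, _⟩) | ⟨hP, _⟩) <;> exact hP
      have d01 : Disjoint (Finset.univ.filter (fun π : Equiv.Perm (Fin (m+3)) =>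
          (occ13_2 π = 0 ∧ occ23_1 π = 1) ∧ permVal π 0 = m+2))
          (Finset.univ.filter (fun π : Equiv.Perm (Fin (m+3)) =>
            (occ13_2 π = 0 ∧ occ23_1 π = 1) ∧ permVal π (m+1) = m+2)) := by
        rw [Finset.disjoint_left]
        intro π h1 h2
        simp only [Finset.mem_filter, Finset.mem_univ, true_and] at h1 h2
        have := permVal_inj π (show 0 < m+3 by omega) (show m+1 < m+3 by omega)
          (h1.2.trans h2.2.symm)
        omega
      have d2 : Disjoint ((Finset.univ.filter (fun π : Equiv.Perm (Fin (m+3)) =>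
          (occ13_2 π = 0 ∧ occ23_1 π = 1) ∧ permVal π 0 = m+2)) ∪
          (Finset.univ.filter (fun π : Equiv.Perm (Fin (m+3)) =>
            (occ13_2 π = 0 ∧ occ23_1 π = 1) ∧ permVal π (m+1) = m+2)))
          (Finset.univ.filter (fun π : Equiv.Perm (Fin (m+3)) =>
            (occ13_2 π = 0 ∧ occ23_1 π = 1) ∧ permVal π (m+2) = m+2)) := by
        rw [Finset.disjoint_left]
        intro π h1 h2
        simp only [Finset.mem_union, Finset.mem_filter, Finset.mem_univ, true_and] at h1 h2
        rcases h1 with h1 | h1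
        · have := permVal_inj π (show 0 < m+3 by omega) (show m+2 < m+3 by omega)
            (h1.2.trans h2.2.symm)
          omega
        · have := permVal_inj π (show m+1 < m+3 by omega) (show m+2 < m+3 by omega)
            (h1.2.trans h2.2.symm)
          omega
      rw [hsplit, Finset.card_union_of_disjoint d2, Finset.card_union_of_disjoint d01,
        card_S0, card_S1, card_S2, hC]
      have h2m : 1 ≤ 2^m := Nat.one_le_two_pow
      have hp : 2^(m+1) = 2^m * 2 := pow_succ 2 m
      omega
    have he : m + 2 + 1 = m + 3 := rfl
    rw [show m + 2 + 1 - 2 = m + 1 by omega]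
    exact key

theorem stmt12 (n : ℕ) (hn : 2 ≤ n) :
    (Finset.univ.filter (fun π : Equiv.Perm (Fin n) =>
      occ13_2 π = 0 ∧ occ23_1 π = 1)).card = 2 ^ (n - 2) - 1 := by
  exact stmt12' n hn
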